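/- Let x: U → ℝ³ be a proper frontal with tangent moving basis Ω = (w₁ w₂) and induced unit normal n. Suppose the Gaussian curvature K of x (defined on U∖Σ(x)) has a smooth nowhere-vanishing extension to U, set φ := |K|^{1/4}, and suppose there exist a, b ∈ C^∞(U,ℝ) such that for every q ∈ U the vector (a(q), b(q))ᵀ equals the limit, as u → q through U∖Σ(x), of [[e_Ω, f₂Ω],[f₁Ω, g_Ω]]⁻¹(u) · (−φ_{u₁}(u), −φ_{u₂}(u))ᵀ. Then ξ := φn + a w₁ + b w₂ is the Blaschke vector field of x. -/

import Mathlib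

open Matrix Topology Filter

noncomputable section

/-- Vectors in ℝ³. -/
abbrev V3 : Type := Fin 3 → ℝ

/-- The Euclidean dot product on ℝ³. -/
def dot3 (v w : V3) : ℝ := v 0 * w 0 + v 1 * w 1 + v 2 * w 2

/-- The cross product on ℝ³. -/
def cross3 (v w : V3) : V3 :=
  ![v 1 * w 2 - v 2 * w 1, v 2 * w 0 - v 0 * w 2, v 0 * w 1 - v 1 * w 0]

/-- Partial derivative in the `u₁` direction. -/
def pd1 {E : Type*} [NormedAddCommGroup E] [NormedSpace ℝ E]
    (f : ℝ × ℝ → E) (q : ℝ × ℝ) : E := fderiv ℝ f q (1, 0)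

/-- Partial derivative in the `u₂` direction. -/
def pd2 {E : Type*} [NormedAddCommGroup E] [NormedSpace ℝ E]
    (f : ℝ × ℝ → E) (q : ℝ × ℝ) : E := fderiv ℝ f q (0, 1)

/-- The singular set `Σ(x)` of `x` on `U`. -/
def SingSet (x : ℝ × ℝ → V3) (U : Set (ℝ × ℝ)) : Set (ℝ × ℝ) :=
  {q ∈ U | ¬ LinearIndependent ℝ ![pd1 x q, pd2 x q]}

/-- `x` is a frontal on the open set `U`, with smooth unit normal field `n`. -/
def IsFrontal (x n : ℝ × ℝ → V3) (U : Set (ℝ × ℝ)) : Prop :=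
  IsOpen U ∧ ContDiffOn ℝ (⊤ : ℕ∞) x U ∧ ContDiffOn ℝ (⊤ : ℕ∞) n U ∧
  (∀ q ∈ U, dot3 (n q) (n q) = 1) ∧
  (∀ q ∈ U, dot3 (pd1 x q) (n q) = 0 ∧ dot3 (pd2 x q) (n q) = 0)

/-- `x` is proper: its singular set has empty interior. -/
def IsProper (x : ℝ × ℝ → V3) (U : Set (ℝ × ℝ)) : Prop :=
  interior (SingSet x U) = ∅

/-- `(w1 w2)` is a tangent moving basis of `x` on `U`. -/
def IsTMB (x w1 w2 : ℝ × ℝ → V3) (U : Set (ℝ × ℝ)) : Prop :=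
  ContDiffOn ℝ (⊤ : ℕ∞) w1 U ∧ ContDiffOn ℝ (⊤ : ℕ∞) w2 U ∧
  (∀ q ∈ U, LinearIndependent ℝ ![w1 q, w2 q]) ∧
  (∀ q ∈ U, pd1 x q ∈ Submodule.span ℝ {w1 q, w2 q} ∧
            pd2 x q ∈ Submodule.span ℝ {w1 q, w2 q})

/-- The unit normal induced by a tangent moving basis: `w₁ × w₂ / ‖w₁ × w₂‖`. -/
def inducedNormal (w1 w2 : ℝ × ℝ → V3) (q : ℝ × ℝ) : V3 :=
  (Real.sqrt (dot3 (cross3 (w1 q) (w2 q)) (cross3 (w1 q) (w2 q))))⁻¹ •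
    cross3 (w1 q) (w2 q)

/-- The matrix `I_Ω = Ωᵀ Ω`. -/
def IOmega (w1 w2 : ℝ × ℝ → V3) (q : ℝ × ℝ) : Matrix (Fin 2) (Fin 2) ℝ :=
  !![dot3 (w1 q) (w1 q), dot3 (w1 q) (w2 q);
     dot3 (w2 q) (w1 q), dot3 (w2 q) (w2 q)]

/-- The matrix `II_Ω`, with `(II_Ω)ᵢⱼ = ⟨(wᵢ)_{uⱼ}, n⟩` for the induced normal `n`. -/
def IIOmega (w1 w2 : ℝ × ℝ → V3) (q : ℝ × ℝ) : Matrix (Fin 2) (Fin 2) ℝ :=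
  !![dot3 (pd1 w1 q) (inducedNormal w1 w2 q), dot3 (pd2 w1 q) (inducedNormal w1 w2 q);
     dot3 (pd1 w2 q) (inducedNormal w1 w2 q), dot3 (pd2 w2 q) (inducedNormal w1 w2 q)]

/-- The Ω-relative curvature `K_Ω = det (−II_Ωᵀ I_Ω⁻¹)`. -/
def relK (w1 w2 : ℝ × ℝ → V3) (q : ℝ × ℝ) : ℝ :=
  (-(IIOmega w1 w2 q)ᵀ * (IOmega w1 w2 q)⁻¹).det

/-- The tangent plane at a regular point, `span{x_{u₁}, x_{u₂}}`. -/
def tangentSpan (x : ℝ × ℝ → V3) (q : ℝ × ℝ) : Submodule ℝ V3 :=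
  Submodule.span ℝ {pd1 x q, pd2 x q}

/-- The Gaussian curvature `K = (eg − f²)/(EG − F²)` w.r.t. the unit normal `n`. -/
def gaussK (x n : ℝ × ℝ → V3) (q : ℝ × ℝ) : ℝ :=
  (dot3 (pd1 (pd1 x) q) (n q) * dot3 (pd2 (pd2 x) q) (n q)
      - dot3 (pd2 (pd1 x) q) (n q) ^ 2) /
    (dot3 (pd1 x q) (pd1 x q) * dot3 (pd2 x q) (pd2 x q)
      - dot3 (pd1 x q) (pd2 x q) ^ 2)

/-- `ξ` is the usual Blaschke normal vector field of `x` on the (regular) set `R`: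
`⟨ξ, n⟩ = |K|^{1/4}`, its tangential part `W = ξ − ⟨ξ,n⟩n` is tangent, and `ξ` is
equiaffine (its partial derivatives are tangent), which encodes `II(W, X) = −X(|K|^{1/4})`. -/
def IsUsualBlaschkeOn (x n ξ : ℝ × ℝ → V3) (R : Set (ℝ × ℝ)) : Prop :=
  ∀ q ∈ R,
    dot3 (ξ q) (n q) = |gaussK x n q| ^ ((4 : ℝ)⁻¹) ∧
    (ξ q - dot3 (ξ q) (n q) • n q ∈ tangentSpan x q) ∧
    pd1 ξ q ∈ tangentSpan x q ∧ pd2 ξ q ∈ tangentSpan x q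

/-- `ξ` is the Blaschke vector field of the frontal `x`: a smooth extension to `U` of
the usual Blaschke vector field defined on the regular part `U ∖ Σ(x)`. -/
def IsBlaschkeField (x n ξ : ℝ × ℝ → V3) (U : Set (ℝ × ℝ)) : Prop :=
  ContDiffOn ℝ (⊤ : ℕ∞) ξ U ∧ IsUsualBlaschkeOn x n ξ (U \ SingSet x U)

/-- Entrywise partial derivative of a matrix-valued map, in the `u₁` direction. -/
def pdMat1 {m n : Type*} (M : ℝ × ℝ → Matrix m n ℝ) (q : ℝ × ℝ) : Matrix m n ℝ :=
  Matrix.of fun i j => pd1 (fun u => M u i j) q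

/-- Entrywise partial derivative of a matrix-valued map, in the `u₂` direction. -/
def pdMat2 {m n : Type*} (M : ℝ × ℝ → Matrix m n ℝ) (q : ℝ × ℝ) : Matrix m n ℝ :=
  Matrix.of fun i j => pd2 (fun u => M u i j) q

section Helpers

lemma fderiv_dot3 {f g : ℝ × ℝ → V3} {q : ℝ × ℝ}
    (hf : DifferentiableAt ℝ f q) (hg : DifferentiableAt ℝ g q) (v : ℝ × ℝ) :
    fderiv ℝ (fun u => dot3 (f u) (g u)) q v
      = dot3 (fderiv ℝ f q v) (g q) + dot3 (f q) (fderiv ℝ g q v) := by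
  have hfi : ∀ i : Fin 3, HasFDerivAt (fun u => f u i)
      ((ContinuousLinearMap.proj (R := ℝ) (φ := fun _ : Fin 3 => ℝ) i).comp (fderiv ℝ f q)) q :=
    fun i => by exact (ContinuousLinearMap.proj i).hasFDerivAt.comp q hf.hasFDerivAt
  have hgi : ∀ i : Fin 3, HasFDerivAt (fun u => g u i)
      ((ContinuousLinearMap.proj (R := ℝ) (φ := fun _ : Fin 3 => ℝ) i).comp (fderiv ℝ g q)) q :=
    fun i => by exact (ContinuousLinearMap.proj i).hasFDerivAt.comp q hg.hasFDerivAt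
  have h := (((hfi 0).mul (hgi 0)).add ((hfi 1).mul (hgi 1))).add ((hfi 2).mul (hgi 2))
  have h2 : HasFDerivAt (fun u => dot3 (f u) (g u)) _ q := h
  rw [h2.fderiv]
  simp [dot3]
  ring

lemma dot3_comm (v w : V3) : dot3 v w = dot3 w v := by simp [dot3]; ring

lemma dot3_comb (c d e : ℝ) (v w z t : V3) :
    dot3 (c • v + (d • w + e • z)) t = c * dot3 v t + d * dot3 w t + e * dot3 z t := by
  simp [dot3]; ring

lemma dot3_w1_normal (w1 w2 : ℝ × ℝ → V3) (u : ℝ × ℝ) :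
    dot3 (w1 u) (inducedNormal w1 w2 u) = 0 := by
  simp only [inducedNormal, dot3, cross3, Pi.smul_apply, smul_eq_mul]
  simp [Matrix.cons_val_zero, Matrix.cons_val_one]
  ring

lemma dot3_w2_normal (w1 w2 : ℝ × ℝ → V3) (u : ℝ × ℝ) :
    dot3 (w2 u) (inducedNormal w1 w2 u) = 0 := by
  simp only [inducedNormal, dot3, cross3, Pi.smul_apply, smul_eq_mul]
  simp [Matrix.cons_val_zero, Matrix.cons_val_one]
  ring

-- derivative of a function constant on an open set

lemma fderiv_eq_zero_on_const {F : ℝ × ℝ → ℝ} {U : Set (ℝ × ℝ)} (hU : IsOpen U)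
    {q : ℝ × ℝ} (hq : q ∈ U) {c : ℝ} (h : ∀ u ∈ U, F u = c) :
    fderiv ℝ F q = 0 := by
  have hev : F =ᶠ[𝓝 q] fun _ => c := eventually_of_mem (hU.mem_nhds hq) h
  rw [hev.fderiv_eq]
  exact fderiv_const_apply c

-- differentiability / continuity of pd's

lemma diffAt_of_contDiffOn {E : Type*} [NormedAddCommGroup E] [NormedSpace ℝ E]
    {f : ℝ × ℝ → E} {U : Set (ℝ × ℝ)} (hU : IsOpen U) (hf : ContDiffOn ℝ (⊤ : ℕ∞) f U)
    {q : ℝ × ℝ} (hq : q ∈ U) : DifferentiableAt ℝ f q :=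
  (hf.contDiffAt (hU.mem_nhds hq)).differentiableAt (by simp)

lemma diffAt_pd1 {E : Type*} [NormedAddCommGroup E] [NormedSpace ℝ E]
    {f : ℝ × ℝ → E} {U : Set (ℝ × ℝ)} (hU : IsOpen U) (hf : ContDiffOn ℝ (⊤ : ℕ∞) f U)
    {q : ℝ × ℝ} (hq : q ∈ U) : DifferentiableAt ℝ (pd1 f) q := by
  have h1 : ContDiffAt ℝ 1 (fderiv ℝ f) q :=
    (hf.contDiffAt (hU.mem_nhds hq)).fderiv_right (WithTop.coe_le_coe.mpr le_top)
  have := h1.differentiableAt one_ne_zero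
  exact ((ContinuousLinearMap.apply ℝ E ((1:ℝ),(0:ℝ))).differentiableAt).comp q this

lemma diffAt_pd2 {E : Type*} [NormedAddCommGroup E] [NormedSpace ℝ E]
    {f : ℝ × ℝ → E} {U : Set (ℝ × ℝ)} (hU : IsOpen U) (hf : ContDiffOn ℝ (⊤ : ℕ∞) f U)
    {q : ℝ × ℝ} (hq : q ∈ U) : DifferentiableAt ℝ (pd2 f) q := by
  have h1 : ContDiffAt ℝ 1 (fderiv ℝ f) q :=
    (hf.contDiffAt (hU.mem_nhds hq)).fderiv_right (WithTop.coe_le_coe.mpr le_top)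
  have := h1.differentiableAt one_ne_zero
  exact ((ContinuousLinearMap.apply ℝ E ((0:ℝ),(1:ℝ))).differentiableAt).comp q this

lemma contOn_pd1 {E : Type*} [NormedAddCommGroup E] [NormedSpace ℝ E]
    {f : ℝ × ℝ → E} {U : Set (ℝ × ℝ)} (hU : IsOpen U) (hf : ContDiffOn ℝ (⊤ : ℕ∞) f U) :
    ContinuousOn (pd1 f) U := by
  have h := hf.continuousOn_fderiv_of_isOpen hU (by simp)
  exact (ContinuousLinearMap.apply ℝ E ((1:ℝ),(0:ℝ))).continuous.comp_continuousOn h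

lemma contOn_pd2 {E : Type*} [NormedAddCommGroup E] [NormedSpace ℝ E]
    {f : ℝ × ℝ → E} {U : Set (ℝ × ℝ)} (hU : IsOpen U) (hf : ContDiffOn ℝ (⊤ : ℕ∞) f U) :
    ContinuousOn (pd2 f) U := by
  have h := hf.continuousOn_fderiv_of_isOpen hU (by simp)
  exact (ContinuousLinearMap.apply ℝ E ((0:ℝ),(1:ℝ))).continuous.comp_continuousOn h

lemma contOn_dot3 {F G : ℝ × ℝ → V3} {s : Set (ℝ × ℝ)}
    (hF : ContinuousOn F s) (hG : ContinuousOn G s) :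
    ContinuousOn (fun u => dot3 (F u) (G u)) s := by
  have hFc : ∀ i : Fin 3, ContinuousOn (fun u => F u i) s :=
    fun i => (continuous_apply i).comp_continuousOn hF
  have hGc : ∀ i : Fin 3, ContinuousOn (fun u => G u i) s :=
    fun i => (continuous_apply i).comp_continuousOn hG
  simp only [dot3]
  exact (((hFc 0).mul (hGc 0)).add ((hFc 1).mul (hGc 1))).add ((hFc 2).mul (hGc 2))

-- Schwarz symmetry of mixed partials

lemma pd_symm {f : ℝ × ℝ → V3} {U : Set (ℝ × ℝ)} (hU : IsOpen U)
    (hf : ContDiffOn ℝ (⊤ : ℕ∞) f U) {q : ℝ × ℝ} (hq : q ∈ U) :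
    pd2 (pd1 f) q = pd1 (pd2 f) q := by
  have hct : ContDiffAt ℝ (⊤ : ℕ∞) f q := hf.contDiffAt (hU.mem_nhds hq)
  have hdiff : DifferentiableAt ℝ (fderiv ℝ f) q :=
    (hct.fderiv_right (by exact WithTop.coe_le_coe.mpr le_top)).differentiableAt one_ne_zero
  have hsym : IsSymmSndFDerivAt ℝ f q := hct.isSymmSndFDerivAt (by simp; exact WithTop.coe_le_coe.mpr (le_top : (2:ℕ∞) ≤ ⊤))
  have h1 : fderiv ℝ (fun u => fderiv ℝ f u ((1:ℝ),(0:ℝ))) q ((0:ℝ),(1:ℝ))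
      = fderiv ℝ (fderiv ℝ f) q ((0:ℝ),(1:ℝ)) ((1:ℝ),(0:ℝ)) := by
    rw [fderiv_clm_apply hdiff (differentiableAt_const _)]
    simp
  have h2 : fderiv ℝ (fun u => fderiv ℝ f u ((0:ℝ),(1:ℝ))) q ((1:ℝ),(0:ℝ))
      = fderiv ℝ (fderiv ℝ f) q ((1:ℝ),(0:ℝ)) ((0:ℝ),(1:ℝ)) := by
    rw [fderiv_clm_apply hdiff (differentiableAt_const _)]
    simp
  show fderiv ℝ (pd1 f) q ((0:ℝ),(1:ℝ)) = fderiv ℝ (pd2 f) q ((1:ℝ),(0:ℝ))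
  have e1 : pd1 f = fun u => fderiv ℝ f u ((1:ℝ),(0:ℝ)) := rfl
  have e2 : pd2 f = fun u => fderiv ℝ f u ((0:ℝ),(1:ℝ)) := rfl
  rw [e1, e2, h1, h2, hsym.eq]

def dotL (w : V3) : V3 →ₗ[ℝ] ℝ where
  toFun v := dot3 v w
  map_add' v v' := by simp [dot3]; ring
  map_smul' c v := by simp [dot3]; ring

lemma tangent_eq_ker {x : ℝ × ℝ → V3} {q : ℝ × ℝ} {N : V3}
    (hLI : LinearIndependent ℝ ![pd1 x q, pd2 x q])
    (hNN : dot3 N N = 1)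
    (h1 : dot3 (pd1 x q) N = 0) (h2 : dot3 (pd2 x q) N = 0) :
    tangentSpan x q = LinearMap.ker (dotL N) := by
  have hle : tangentSpan x q ≤ LinearMap.ker (dotL N) := by
    rw [tangentSpan, Submodule.span_le]
    rintro v (rfl | rfl)
    · exact h1
    · exact h2
  have hrange : LinearMap.range (dotL N) = ⊤ := by
    rw [Submodule.eq_top_iff']
    intro c
    exact ⟨c • N, by simp [dotL, dot3] at hNN ⊢; rw [hNN]; ring⟩
  have hker : Module.finrank ℝ (LinearMap.ker (dotL N)) = 2 := by
    have := LinearMap.finrank_range_add_finrank_ker (dotL N)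
    rw [hrange] at this
    simp [Module.finrank_self] at this
    have hV3 : Module.finrank ℝ V3 = 3 := by simp
    omega
  have hsp : Module.finrank ℝ (tangentSpan x q) = 2 := by
    have h := finrank_span_eq_card hLI
    have : Set.range ![pd1 x q, pd2 x q] = {pd1 x q, pd2 x q} := by
      simp [Matrix.range_cons, Matrix.range_empty, Set.pair_comm]
    rw [this] at h
    rw [tangentSpan]
    convert h using 1
    simp
  exact Submodule.eq_of_le_of_finrank_le hle (by rw [hker, hsp])

lemma abs_rpow_quarter (t : ℝ) : |t| ^ ((4:ℝ)⁻¹) = (t ^ 2) ^ ((8:ℝ)⁻¹) := by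
  have h1 : t ^ 2 = |t| ^ (2:ℕ) := (sq_abs t).symm
  rw [h1, ← Real.rpow_natCast |t| 2, ← Real.rpow_mul (abs_nonneg t)]
  norm_num

lemma contDiffOn_phi {Kext : ℝ × ℝ → ℝ} {U : Set (ℝ × ℝ)} (hU : IsOpen U)
    (hKs : ContDiffOn ℝ (⊤ : ℕ∞) Kext U) (hK0 : ∀ q ∈ U, Kext q ≠ 0) :
    ContDiffOn ℝ (⊤ : ℕ∞) (fun u => |Kext u| ^ ((4:ℝ)⁻¹)) U := by
  have heq : (fun u => |Kext u| ^ ((4:ℝ)⁻¹)) = fun u => (Kext u ^ 2) ^ ((8:ℝ)⁻¹) := by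
    funext u; exact abs_rpow_quarter _
  rw [heq]
  intro q hq
  have hsq : ContDiffAt ℝ (⊤ : ℕ∞) (fun u => Kext u ^ 2) q := by
    have := hKs.contDiffAt (hU.mem_nhds hq)
    exact this.pow 2
  have hne : Kext q ^ 2 ≠ 0 := pow_ne_zero _ (hK0 q hq)
  exact (hsq.rpow_const_of_ne hne).contDiffWithinAt

lemma dot3_pair (c d : ℝ) (v w t : V3) :
    dot3 (c • v + d • w) t = c * dot3 v t + d * dot3 w t := by
  simp [dot3]; ring

lemma pd_dot_zero {f g : ℝ × ℝ → V3} {U : Set (ℝ × ℝ)} (hU : IsOpen U)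
    {q : ℝ × ℝ} (hq : q ∈ U)
    (hf : DifferentiableAt ℝ f q) (hg : DifferentiableAt ℝ g q)
    (h : ∀ u ∈ U, dot3 (f u) (g u) = 0) (v : ℝ × ℝ) :
    dot3 (fderiv ℝ f q v) (g q) = - dot3 (f q) (fderiv ℝ g q v) := by
  have h0 : fderiv ℝ (fun u => dot3 (f u) (g u)) q = 0 :=
    fderiv_eq_zero_on_const hU hq h
  have h1 := fderiv_dot3 hf hg v
  rw [h0] at h1
  simp at h1
  linarith

lemma pd_dot_self_one {g : ℝ × ℝ → V3} {U : Set (ℝ × ℝ)} (hU : IsOpen U)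
    {q : ℝ × ℝ} (hq : q ∈ U) (hg : DifferentiableAt ℝ g q)
    (h : ∀ u ∈ U, dot3 (g u) (g u) = 1) (v : ℝ × ℝ) :
    dot3 (g q) (fderiv ℝ g q v) = 0 := by
  have h0 : fderiv ℝ (fun u => dot3 (g u) (g u)) q = 0 :=
    fderiv_eq_zero_on_const hU hq h
  have h1 := fderiv_dot3 hg hg v
  rw [h0] at h1
  simp at h1
  rw [dot3_comm] at h1
  linarith

lemma detA_ne (U : Set (ℝ × ℝ)) (x w1 w2 : ℝ × ℝ → V3)
    (hfr : IsFrontal x (inducedNormal w1 w2) U)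
    (hΩ4 : ∀ q ∈ U, pd1 x q ∈ Submodule.span ℝ {w1 q, w2 q} ∧
            pd2 x q ∈ Submodule.span ℝ {w1 q, w2 q})
    (hw1 : ContDiffOn ℝ (⊤ : ℕ∞) w1 U) (hw2 : ContDiffOn ℝ (⊤ : ℕ∞) w2 U)
    {r : ℝ × ℝ} (hrU : r ∈ U) (hKne : gaussK x (inducedNormal w1 w2) r ≠ 0) :
    dot3 (pd1 w1 r) (inducedNormal w1 w2 r) * dot3 (pd2 w2 r) (inducedNormal w1 w2 r)
      - dot3 (pd1 w2 r) (inducedNormal w1 w2 r) * dot3 (pd2 w1 r) (inducedNormal w1 w2 r)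
        ≠ 0 := by
  set N := inducedNormal w1 w2 with hNdef
  obtain ⟨hU, hxs, hNs, hNN, horth⟩ := hfr
  have hNd : DifferentiableAt ℝ N r := diffAt_of_contDiffOn hU hNs hrU
  have hx1d : DifferentiableAt ℝ (pd1 x) r := diffAt_pd1 hU hxs hrU
  have hx2d : DifferentiableAt ℝ (pd2 x) r := diffAt_pd2 hU hxs hrU
  have hw1d : DifferentiableAt ℝ w1 r := diffAt_of_contDiffOn hU hw1 hrU
  have hw2d : DifferentiableAt ℝ w2 r := diffAt_of_contDiffOn hU hw2 hrU
  have hw1n : ∀ u ∈ U, dot3 (w1 u) (N u) = 0 := fun u _ => dot3_w1_normal w1 w2 u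
  have hw2n : ∀ u ∈ U, dot3 (w2 u) (N u) = 0 := fun u _ => dot3_w2_normal w1 w2 u
  -- matrix entries
  set a11 := dot3 (pd1 w1 r) (N r) with ha11
  set a12 := dot3 (pd2 w1 r) (N r) with ha12
  set a21 := dot3 (pd1 w2 r) (N r) with ha21
  set a22 := dot3 (pd2 w2 r) (N r) with ha22
  -- ⟨w_i, pd_j N⟩ = -a_ij
  have C11 : dot3 (pd1 w1 r) (N r) = - dot3 (w1 r) (pd1 N r) :=
    pd_dot_zero hU hrU hw1d hNd hw1n ((1:ℝ),(0:ℝ))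
  have C12 : dot3 (pd2 w1 r) (N r) = - dot3 (w1 r) (pd2 N r) :=
    pd_dot_zero hU hrU hw1d hNd hw1n ((0:ℝ),(1:ℝ))
  have C21 : dot3 (pd1 w2 r) (N r) = - dot3 (w2 r) (pd1 N r) :=
    pd_dot_zero hU hrU hw2d hNd hw2n ((1:ℝ),(0:ℝ))
  have C22 : dot3 (pd2 w2 r) (N r) = - dot3 (w2 r) (pd2 N r) :=
    pd_dot_zero hU hrU hw2d hNd hw2n ((0:ℝ),(1:ℝ))
  have B11 : dot3 (w1 r) (pd1 N r) = -a11 := by rw [ha11]; linarith [C11]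
  have B12 : dot3 (w1 r) (pd2 N r) = -a12 := by rw [ha12]; linarith [C12]
  have B21 : dot3 (w2 r) (pd1 N r) = -a21 := by rw [ha21]; linarith [C21]
  have B22 : dot3 (w2 r) (pd2 N r) = -a22 := by rw [ha22]; linarith [C22]
  -- second-derivative relations
  have he : dot3 (pd1 (pd1 x) r) (N r) = - dot3 (pd1 x r) (pd1 N r) :=
    pd_dot_zero hU hrU hx1d hNd (fun u hu => (horth u hu).1) ((1:ℝ),(0:ℝ))
  have hf1 : dot3 (pd2 (pd1 x) r) (N r) = - dot3 (pd1 x r) (pd2 N r) :=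
    pd_dot_zero hU hrU hx1d hNd (fun u hu => (horth u hu).1) ((0:ℝ),(1:ℝ))
  have hf2 : dot3 (pd1 (pd2 x) r) (N r) = - dot3 (pd2 x r) (pd1 N r) :=
    pd_dot_zero hU hrU hx2d hNd (fun u hu => (horth u hu).2) ((1:ℝ),(0:ℝ))
  have hg : dot3 (pd2 (pd2 x) r) (N r) = - dot3 (pd2 x r) (pd2 N r) :=
    pd_dot_zero hU hrU hx2d hNd (fun u hu => (horth u hu).2) ((0:ℝ),(1:ℝ))
  have hsym : pd2 (pd1 x) r = pd1 (pd2 x) r := pd_symm hU hxs hrU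
  obtain ⟨l1, l2, hl⟩ := Submodule.mem_span_pair.mp (hΩ4 r hrU).1
  obtain ⟨m1, m2, hm⟩ := Submodule.mem_span_pair.mp (hΩ4 r hrU).2
  -- expansions
  have he' : dot3 (pd1 (pd1 x) r) (N r) = l1 * a11 + l2 * a21 := by
    rw [he, ← hl, dot3_pair, B11, B21]; ring
  have hf1' : dot3 (pd2 (pd1 x) r) (N r) = l1 * a12 + l2 * a22 := by
    rw [hf1, ← hl, dot3_pair, B12, B22]; ring
  have hf2' : dot3 (pd2 (pd1 x) r) (N r) = m1 * a11 + m2 * a21 := by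
    rw [hsym, hf2, ← hm, dot3_pair, B11, B21]; ring
  have hg' : dot3 (pd2 (pd2 x) r) (N r) = m1 * a12 + m2 * a22 := by
    rw [hg, ← hm, dot3_pair, B12, B22]; ring
  have hnum : dot3 (pd1 (pd1 x) r) (N r) * dot3 (pd2 (pd2 x) r) (N r)
      - dot3 (pd2 (pd1 x) r) (N r) ^ 2
      = (l1 * m2 - l2 * m1) * (a11 * a22 - a12 * a21) := by
    rw [he', hg', pow_two]
    nth_rewrite 1 [hf1']
    rw [hf2']
    ring
  have hnum_ne : dot3 (pd1 (pd1 x) r) (N r) * dot3 (pd2 (pd2 x) r) (N r)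
      - dot3 (pd2 (pd1 x) r) (N r) ^ 2 ≠ 0 := by
    intro h0
    exact hKne (by rw [gaussK, h0]; simp)
  rw [hnum] at hnum_ne
  intro h0
  apply hnum_ne
  rw [show a11 * a22 - a12 * a21 = a11 * a22 - a21 * a12 from by ring, h0, mul_zero]

end Helpers

/-- Conversely, if the Gaussian curvature of a proper frontal `x` has a
smooth nowhere-vanishing extension `Kext` to `U`, and if there are smooth `a, b` such
that `(a q, b q)` is, at every `q ∈ U`, the limit through `U ∖ Σ(x)` of
`[[e_Ω, f₂Ω],[f₁Ω, g_Ω]]⁻¹ ⬝ (−φ_{u₁}, −φ_{u₂})` with `φ = |Kext|^{1/4}`, then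
`ξ = φn + a w₁ + b w₂` is the Blaschke vector field of `x`. -/
theorem statement7 (U : Set (ℝ × ℝ)) (x w1 w2 : ℝ × ℝ → V3)
    (hx : ContDiffOn ℝ (⊤ : ℕ∞) x U)
    (hfr : IsFrontal x (inducedNormal w1 w2) U) (hpr : IsProper x U)
    (hΩ : IsTMB x w1 w2 U)
    (Kext : ℝ × ℝ → ℝ)
    (hKs : ContDiffOn ℝ (⊤ : ℕ∞) Kext U) (hK0 : ∀ q ∈ U, Kext q ≠ 0)
    (hKext : ∀ q ∈ U \ SingSet x U, Kext q = gaussK x (inducedNormal w1 w2) q)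
    (a b : ℝ × ℝ → ℝ)
    (has : ContDiffOn ℝ (⊤ : ℕ∞) a U) (hbs : ContDiffOn ℝ (⊤ : ℕ∞) b U)
    (hlim : ∀ q ∈ U, Tendsto (fun u =>
        (!![dot3 (pd1 w1 u) (inducedNormal w1 w2 u),
            dot3 (pd1 w2 u) (inducedNormal w1 w2 u);
            dot3 (pd2 w1 u) (inducedNormal w1 w2 u),
            dot3 (pd2 w2 u) (inducedNormal w1 w2 u)])⁻¹ *ᵥ
          ![-(pd1 (fun v => |Kext v| ^ ((4 : ℝ)⁻¹)) u),
            -(pd2 (fun v => |Kext v| ^ ((4 : ℝ)⁻¹)) u)])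
      (𝓝[U \ SingSet x U] q) (𝓝 ![a q, b q])) :
    IsBlaschkeField x (inducedNormal w1 w2)
      (fun q => (|Kext q| ^ ((4 : ℝ)⁻¹)) • inducedNormal w1 w2 q
        + (a q • w1 q + b q • w2 q)) U := by
  obtain ⟨hU, hxs, hNs, hNN, horth⟩ := hfr
  obtain ⟨hw1s, hw2s, hwLI, hspan⟩ := hΩ
  set φ : ℝ × ℝ → ℝ := fun v => |Kext v| ^ ((4 : ℝ)⁻¹) with hφdef
  set N : ℝ × ℝ → V3 := inducedNormal w1 w2 with hNdef
  have hφs : ContDiffOn ℝ (⊤ : ℕ∞) φ U := contDiffOn_phi hU hKs hK0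
  have hξs : ContDiffOn ℝ (⊤ : ℕ∞)
      (fun q => (|Kext q| ^ ((4 : ℝ)⁻¹)) • N q + (a q • w1 q + b q • w2 q)) U :=
    (hφs.smul hNs).add ((has.smul hw1s).add (hbs.smul hw2s))
  refine ⟨hξs, ?_⟩
  intro q hq
  have hqU : q ∈ U := hq.1
  have hLI : LinearIndependent ℝ ![pd1 x q, pd2 x q] := by
    by_contra h
    exact hq.2 (Set.mem_sep hqU h)
  have hNd : DifferentiableAt ℝ N q := diffAt_of_contDiffOn hU hNs hqU
  have hw1d : DifferentiableAt ℝ w1 q := diffAt_of_contDiffOn hU hw1s hqU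
  have hw2d : DifferentiableAt ℝ w2 q := diffAt_of_contDiffOn hU hw2s hqU
  have hw1n : ∀ u ∈ U, dot3 (w1 u) (N u) = 0 := fun u _ => dot3_w1_normal w1 w2 u
  have hw2n : ∀ u ∈ U, dot3 (w2 u) (N u) = 0 := fun u _ => dot3_w2_normal w1 w2 u
  have hker := tangent_eq_ker hLI (hNN q hqU) (horth q hqU).1 (horth q hqU).2
  have hmem : ∀ v : V3, dot3 v (N q) = 0 → v ∈ tangentSpan x q := by
    intro v hv
    rw [hker]
    exact LinearMap.mem_ker.mpr hv
  -- the limit argument giving the two row equations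
  set Mf : ℝ × ℝ → Matrix (Fin 2) (Fin 2) ℝ := fun u =>
    !![dot3 (pd1 w1 u) (N u), dot3 (pd1 w2 u) (N u);
       dot3 (pd2 w1 u) (N u), dot3 (pd2 w2 u) (N u)] with hMf
  set vf : ℝ × ℝ → (Fin 2 → ℝ) := fun u => ![-(pd1 φ u), -(pd2 φ u)] with hvf
  have hl : Tendsto (fun u => (Mf u)⁻¹ *ᵥ vf u) (𝓝[U \ SingSet x U] q)
      (𝓝 ![a q, b q]) := hlim q hqU
  haveI hNB : (𝓝[U \ SingSet x U] q).NeBot :=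
    mem_closure_iff_nhdsWithin_neBot.mp (subset_closure hq)
  have hdet : ∀ u ∈ U \ SingSet x U, (Mf u).det ≠ 0 := by
    intro u hu
    rw [hMf]
    simp only [Matrix.det_fin_two_of]
    exact detA_ne U x w1 w2 ⟨hU, hxs, hNs, hNN, horth⟩ hspan hw1s hw2s hu.1
      (by rw [← hKext u hu]; exact hK0 u hu.1)
  have hFv : (fun u => Mf u *ᵥ ((Mf u)⁻¹ *ᵥ vf u)) =ᶠ[𝓝[U \ SingSet x U] q] vf := by
    filter_upwards [self_mem_nhdsWithin] with u hu
    rw [Matrix.mulVec_mulVec, Matrix.mul_nonsing_inv _ (isUnit_iff_ne_zero.mpr (hdet u hu)),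
      Matrix.one_mulVec]
  have t11 : Tendsto (fun u => dot3 (pd1 w1 u) (N u)) (𝓝[U \ SingSet x U] q)
      (𝓝 (dot3 (pd1 w1 q) (N q))) :=
    ((contOn_dot3 (contOn_pd1 hU hw1s) hNs.continuousOn) q hqU).mono Set.diff_subset
  have t21 : Tendsto (fun u => dot3 (pd1 w2 u) (N u)) (𝓝[U \ SingSet x U] q)
      (𝓝 (dot3 (pd1 w2 q) (N q))) :=
    ((contOn_dot3 (contOn_pd1 hU hw2s) hNs.continuousOn) q hqU).mono Set.diff_subset
  have t12 : Tendsto (fun u => dot3 (pd2 w1 u) (N u)) (𝓝[U \ SingSet x U] q)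
      (𝓝 (dot3 (pd2 w1 q) (N q))) :=
    ((contOn_dot3 (contOn_pd2 hU hw1s) hNs.continuousOn) q hqU).mono Set.diff_subset
  have t22 : Tendsto (fun u => dot3 (pd2 w2 u) (N u)) (𝓝[U \ SingSet x U] q)
      (𝓝 (dot3 (pd2 w2 q) (N q))) :=
    ((contOn_dot3 (contOn_pd2 hU hw2s) hNs.continuousOn) q hqU).mono Set.diff_subset
  have tv1 : Tendsto (fun u => -(pd1 φ u)) (𝓝[U \ SingSet x U] q) (𝓝 (-(pd1 φ q))) :=
    (((contOn_pd1 hU hφs) q hqU).mono Set.diff_subset).neg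
  have tv2 : Tendsto (fun u => -(pd2 φ u)) (𝓝[U \ SingSet x U] q) (𝓝 (-(pd2 φ q))) :=
    (((contOn_pd2 hU hφs) q hqU).mono Set.diff_subset).neg
  have g0 : Tendsto (fun u => ((Mf u)⁻¹ *ᵥ vf u) 0) (𝓝[U \ SingSet x U] q) (𝓝 (a q)) := by
    have := tendsto_pi_nhds.mp hl 0
    simpa using this
  have g1 : Tendsto (fun u => ((Mf u)⁻¹ *ᵥ vf u) 1) (𝓝[U \ SingSet x U] q) (𝓝 (b q)) := by
    have := tendsto_pi_nhds.mp hl 1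
    simpa using this
  have key : Tendsto (fun u => Mf u *ᵥ ((Mf u)⁻¹ *ᵥ vf u)) (𝓝[U \ SingSet x U] q)
      (𝓝 ![dot3 (pd1 w1 q) (N q) * a q + dot3 (pd1 w2 q) (N q) * b q,
           dot3 (pd2 w1 q) (N q) * a q + dot3 (pd2 w2 q) (N q) * b q]) := by
    rw [tendsto_pi_nhds]
    intro i
    fin_cases i
    · simpa [hMf, Matrix.mulVec, dotProduct, Fin.sum_univ_two]
        using (t11.mul g0).add (t21.mul g1)
    · simpa [hMf, Matrix.mulVec, dotProduct, Fin.sum_univ_two]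
        using (t12.mul g0).add (t22.mul g1)
  have tv : Tendsto vf (𝓝[U \ SingSet x U] q) (𝓝 (vf q)) := by
    rw [tendsto_pi_nhds]
    intro i
    fin_cases i
    · simpa [hvf] using tv1
    · simpa [hvf] using tv2
  have keq : ![dot3 (pd1 w1 q) (N q) * a q + dot3 (pd1 w2 q) (N q) * b q,
      dot3 (pd2 w1 q) (N q) * a q + dot3 (pd2 w2 q) (N q) * b q] = vf q :=
    tendsto_nhds_unique (Filter.Tendsto.congr' hFv key) tv
  have row1 : dot3 (pd1 w1 q) (N q) * a q + dot3 (pd1 w2 q) (N q) * b q = -(pd1 φ q) := by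
    have := congrFun keq 0
    simpa [hvf] using this
  have row2 : dot3 (pd2 w1 q) (N q) * a q + dot3 (pd2 w2 q) (N q) * b q = -(pd2 φ q) := by
    have := congrFun keq 1
    simpa [hvf] using this
  -- value of ⟨ξ, n⟩
  have hval : dot3 ((|Kext q| ^ ((4 : ℝ)⁻¹)) • N q + (a q • w1 q + b q • w2 q)) (N q)
      = φ q := by
    rw [show (|Kext q| ^ ((4 : ℝ)⁻¹)) = φ q from rfl, dot3_comb, hNN q hqU,
      hw1n q hqU, hw2n q hqU]
    ring
  -- differentiability of ξ
  have hξd : DifferentiableAt ℝ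
      (fun u => (|Kext u| ^ ((4 : ℝ)⁻¹)) • N u + (a u • w1 u + b u • w2 u)) q :=
    diffAt_of_contDiffOn hU hξs hqU
  -- ⟨ξ, n⟩ = φ on U
  have hξev : ∀ u ∈ U,
      dot3 ((|Kext u| ^ ((4 : ℝ)⁻¹)) • N u + (a u • w1 u + b u • w2 u)) (N u) = φ u := by
    intro u hu
    rw [show (|Kext u| ^ ((4 : ℝ)⁻¹)) = φ u from rfl, dot3_comb, hNN u hu,
      hw1n u hu, hw2n u hu]
    ring
  -- the four orthogonality derivatives at q
  have B11 : dot3 (w1 q) (pd1 N q) = -(dot3 (pd1 w1 q) (N q)) := by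
    have h := pd_dot_zero hU hqU hw1d hNd hw1n ((1:ℝ),(0:ℝ))
    have h' : dot3 (pd1 w1 q) (N q) = - dot3 (w1 q) (pd1 N q) := h
    linarith
  have B21 : dot3 (w2 q) (pd1 N q) = -(dot3 (pd1 w2 q) (N q)) := by
    have h' : dot3 (pd1 w2 q) (N q) = - dot3 (w2 q) (pd1 N q) :=
      pd_dot_zero hU hqU hw2d hNd hw2n ((1:ℝ),(0:ℝ))
    linarith
  have B12 : dot3 (w1 q) (pd2 N q) = -(dot3 (pd2 w1 q) (N q)) := by
    have h' : dot3 (pd2 w1 q) (N q) = - dot3 (w1 q) (pd2 N q) :=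
      pd_dot_zero hU hqU hw1d hNd hw1n ((0:ℝ),(1:ℝ))
    linarith
  have B22 : dot3 (w2 q) (pd2 N q) = -(dot3 (pd2 w2 q) (N q)) := by
    have h' : dot3 (pd2 w2 q) (N q) = - dot3 (w2 q) (pd2 N q) :=
      pd_dot_zero hU hqU hw2d hNd hw2n ((0:ℝ),(1:ℝ))
    linarith
  have hNp1 : dot3 (N q) (pd1 N q) = 0 := pd_dot_self_one hU hqU hNd hNN ((1:ℝ),(0:ℝ))
  have hNp2 : dot3 (N q) (pd2 N q) = 0 := pd_dot_self_one hU hqU hNd hNN ((0:ℝ),(1:ℝ))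
  -- fderiv of ⟨ξ, n⟩ equals fderiv of φ
  have hev : (fun u => dot3
      ((|Kext u| ^ ((4 : ℝ)⁻¹)) • N u + (a u • w1 u + b u • w2 u)) (N u)) =ᶠ[𝓝 q] φ :=
    eventually_of_mem (hU.mem_nhds hqU) hξev
  have hfd := hev.fderiv_eq (𝕜 := ℝ)
  have hdot1 := fderiv_dot3 hξd hNd ((1:ℝ),(0:ℝ))
  have hdot2 := fderiv_dot3 hξd hNd ((0:ℝ),(1:ℝ))
  rw [hfd] at hdot1 hdot2
  -- expansions of ⟨ξ, pd N⟩
  have hexp1 : dot3 ((|Kext q| ^ ((4 : ℝ)⁻¹)) • N q + (a q • w1 q + b q • w2 q)) (pd1 N q)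
      = (|Kext q| ^ ((4 : ℝ)⁻¹)) * dot3 (N q) (pd1 N q) + a q * dot3 (w1 q) (pd1 N q)
        + b q * dot3 (w2 q) (pd1 N q) := by
    rw [dot3_comb]
  have hexp2 : dot3 ((|Kext q| ^ ((4 : ℝ)⁻¹)) • N q + (a q • w1 q + b q • w2 q)) (pd2 N q)
      = (|Kext q| ^ ((4 : ℝ)⁻¹)) * dot3 (N q) (pd2 N q) + a q * dot3 (w1 q) (pd2 N q)
        + b q * dot3 (w2 q) (pd2 N q) := by
    rw [dot3_comb]
  have hdot1' : pd1 φ q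
      = dot3 (pd1 (fun u => (|Kext u| ^ ((4 : ℝ)⁻¹)) • N u + (a u • w1 u + b u • w2 u)) q) (N q)
        + dot3 ((|Kext q| ^ ((4 : ℝ)⁻¹)) • N q + (a q • w1 q + b q • w2 q)) (pd1 N q) := hdot1
  have hdot2' : pd2 φ q
      = dot3 (pd2 (fun u => (|Kext u| ^ ((4 : ℝ)⁻¹)) • N u + (a u • w1 u + b u • w2 u)) q) (N q)
        + dot3 ((|Kext q| ^ ((4 : ℝ)⁻¹)) • N q + (a q • w1 q + b q • w2 q)) (pd2 N q) := hdot2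
  rw [hexp1, hNp1, B11, B21] at hdot1'
  rw [hexp2, hNp2, B12, B22] at hdot2'
  have hd1 : dot3 (pd1 (fun u => (|Kext u| ^ ((4 : ℝ)⁻¹)) • N u
      + (a u • w1 u + b u • w2 u)) q) (N q) = 0 := by
    linear_combination (-1 : ℝ) * hdot1' + row1
  have hd2 : dot3 (pd2 (fun u => (|Kext u| ^ ((4 : ℝ)⁻¹)) • N u
      + (a u • w1 u + b u • w2 u)) q) (N q) = 0 := by
    linear_combination (-1 : ℝ) * hdot2' + row2
  refine ⟨?_, ?_, ?_, ?_⟩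
  · rw [hval, ← hKext q hq]
  · rw [hval]
    have heq : (|Kext q| ^ ((4 : ℝ)⁻¹)) • N q + (a q • w1 q + b q • w2 q)
        - φ q • N q = a q • w1 q + b q • w2 q := by
      rw [show (|Kext q| ^ ((4 : ℝ)⁻¹)) = φ q from rfl]
      abel
    rw [heq]
    apply hmem
    rw [dot3_pair, hw1n q hqU, hw2n q hqU]
    ring
  · exact hmem _ hd1
  · exact hmem _ hd2


end
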